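/- Arbitrary 2-structure version: a 2-structure g = (V, Υ, φ) is uniformly non-prime if and only if δ_g is a symbolic ultrametric. -/

import Mathlib

/-- A 2-structure is modeled by a labeling `φ : V → V → Υ`; only values on
distinct pairs are relevant. A *module* of the 2-structure. -/
def IsModule {V Υ : Type*} (φ : V → V → Υ) (M : Set V) : Prop :=
  ∀ x ∈ M, ∀ y ∈ M, ∀ z ∉ M, φ x z = φ y z ∧ φ z x = φ z y

/-- A graph-module of a digraph given by its arc relation `E`. -/
def IsGraphModule {V : Type*} (E : V → V → Prop) (M : Set V) : Prop :=
  ∀ x ∈ M, ∀ y ∈ M, ∀ z ∉ M, (E x z ↔ E y z) ∧ (E z x ↔ E z y)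

/-- Two sets overlap: they intersect and neither contains the other. -/
def Overlap {V : Type*} (A B : Set V) : Prop :=
  (A ∩ B).Nonempty ∧ ¬ A ⊆ B ∧ ¬ B ⊆ A

/-- A (nonempty) module of a 2-structure. -/
def IsModuleNe {V Υ : Type*} (φ : V → V → Υ) (M : Set V) : Prop :=
  M.Nonempty ∧ IsModule φ M

/-- A strong module: a module overlapping no other module. -/
def IsStrongModule {V Υ : Type*} (φ : V → V → Υ) (M : Set V) : Prop :=
  IsModuleNe φ M ∧ ∀ N : Set V, IsModuleNe φ N → ¬ Overlap M N

/-- The labeling of the reversible refinement `rev(g)`. -/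
def revMap {V Υ : Type*} (φ : V → V → Υ) : V → V → Υ × Υ :=
  fun x y => (φ x y, φ y x)

/-- A 2-structure is reversible if equally labeled arcs have equally
labeled reverse arcs. -/
def Reversible {V Υ : Type*} (φ : V → V → Υ) : Prop :=
  ∀ x y a b : V, x ≠ y → a ≠ b → φ x y = φ a b → φ y x = φ b a

/-- The unordered pair of labels on the two arcs between `u` and `v`. -/
def Dset {V Υ : Type*} (φ : V → V → Υ) (u v : V) : Set Υ :=
  {φ u v, φ v u}

/-- The triangle condition (U2). -/
def CondU2 {V Υ : Type*} (φ : V → V → Υ) : Prop :=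
  ∀ x y z : V, x ≠ y → x ≠ z → y ≠ z →
    ({Dset φ x y, Dset φ x z, Dset φ y z} : Set (Set Υ)).ncard ≤ 2

/-- The monochromatic digraph `G_i(g)` with arcs labeled `i`. -/
def Ggraph {V Υ : Type*} (φ : V → V → Υ) (i : Υ) : V → V → Prop :=
  fun x y => x ≠ y ∧ φ x y = i

/-- A relation on `Fin n` given by an explicit arc list. -/
def relOf {n : ℕ} (L : List (Fin n × Fin n)) : Fin n → Fin n → Prop :=
  fun k l => (k, l) ∈ L

/-- Forbidden digraph `D₃`: arcs (0,1),(1,2) only. -/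
def FD3 : Fin 3 → Fin 3 → Prop := relOf [(0,1),(1,2)]
/-- Forbidden digraph `A`: an arc into an endpoint of a symmetric edge. -/
def FA : Fin 3 → Fin 3 → Prop := relOf [(0,1),(1,2),(2,1)]
/-- Forbidden digraph `B`: an arc out of an endpoint of a symmetric edge. -/
def FB : Fin 3 → Fin 3 → Prop := relOf [(0,1),(1,0),(1,2)]
/-- Forbidden digraph `D̄₃`: the complement of `D₃`. -/
def FD3c : Fin 3 → Fin 3 → Prop := relOf [(1,0),(2,1),(0,2),(2,0)]
/-- Forbidden digraph `C₃`: a directed triangle. -/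
def FC3 : Fin 3 → Fin 3 → Prop := relOf [(0,1),(1,2),(2,0)]
/-- Forbidden digraph `N`: arcs (1,0),(1,2),(3,2) only. -/
def FN : Fin 4 → Fin 4 → Prop := relOf [(1,0),(1,2),(3,2)]
/-- Forbidden digraph `N̄`: the complement of `N`. -/
def FNc : Fin 4 → Fin 4 → Prop :=
  relOf [(0,1),(2,1),(2,3),(0,2),(2,0),(0,3),(3,0),(1,3),(3,1)]
/-- Forbidden digraph `P₄`: a symmetric path on four vertices. -/
def FP4 : Fin 4 → Fin 4 → Prop := relOf [(0,1),(1,0),(1,2),(2,1),(2,3),(3,2)]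

/-- `E` contains the pattern `K` as an induced subgraph. -/
def HasInducedCopy {V : Type*} (E : V → V → Prop) {n : ℕ}
    (K : Fin n → Fin n → Prop) : Prop :=
  ∃ ι : Fin n → V, Function.Injective ι ∧
    ∀ k l : Fin n, k ≠ l → (E (ι k) (ι l) ↔ K k l)

/-- A di-cograph: a digraph with none of the eight forbidden induced
subgraphs `D₃, A, B, D̄₃, C₃, N̄, N, P₄`. -/
def IsDiCograph {V : Type*} (E : V → V → Prop) : Prop :=
  ¬ HasInducedCopy E FD3 ∧ ¬ HasInducedCopy E FA ∧ ¬ HasInducedCopy E FB ∧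
  ¬ HasInducedCopy E FD3c ∧ ¬ HasInducedCopy E FC3 ∧
  ¬ HasInducedCopy E FNc ∧ ¬ HasInducedCopy E FN ∧ ¬ HasInducedCopy E FP4

/-- Condition (U1): every monochromatic digraph is a di-cograph. -/
def CondU1 {V Υ : Type*} (φ : V → V → Υ) : Prop :=
  ∀ i : Υ, IsDiCograph (Ggraph φ i)

/-- `δ` is a symbolic ultrametric: (U1) and (U2). -/
def SymbolicUltrametric {V Υ : Type*} (φ : V → V → Υ) : Prop :=
  CondU1 φ ∧ CondU2 φ

/-- A module of the induced substructure `g[X]`. -/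
def IsModuleOn {V Υ : Type*} (φ : V → V → Υ) (X M : Set V) : Prop :=
  M ⊆ X ∧ ∀ x ∈ M, ∀ y ∈ M, ∀ z ∈ X \ M, φ x z = φ y z ∧ φ z x = φ z y

/-- The substructure `g[X]` is prime: all its modules are trivial. -/
def IsPrimeOn {V Υ : Type*} (φ : V → V → Υ) (X : Set V) : Prop :=
  ∀ M : Set V, IsModuleOn φ X M → M = ∅ ∨ (∃ v, M = {v}) ∨ M = X

/-- Uniformly non-prime: no induced substructure on ≥ 3 vertices is prime. -/
def Unp {V Υ : Type*} (φ : V → V → Υ) : Prop :=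
  ∀ X : Set V, 3 ≤ X.ncard → ¬ IsPrimeOn φ X

/-- A (nonempty) graph-module of a digraph. -/
def IsGraphModuleNe {V : Type*} (E : V → V → Prop) (M : Set V) : Prop :=
  M.Nonempty ∧ IsGraphModule E M

/-- A strong graph-module of a digraph. -/
def IsStrongGraphModule {V : Type*} (E : V → V → Prop) (M : Set V) : Prop :=
  IsGraphModuleNe E M ∧ ∀ N : Set V, IsGraphModuleNe E N → ¬ Overlap M N

/-- The subgraph induced on `M` is (weakly) connected. -/
def ConnectedOn {V : Type*} (E : V → V → Prop) (M : Set V) : Prop :=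
  ∀ x ∈ M, ∀ y ∈ M,
    Relation.ReflTransGen (fun a b => a ∈ M ∧ b ∈ M ∧ (E a b ∨ E b a)) x y

/-- `M` is a 1-cluster of (the cotree of) the di-cograph `E`: a strong module
with at least two vertices whose cotree vertex is series or order, i.e. whose
induced subgraph is weakly connected. -/
def IsOneCluster {V : Type*} (E : V → V → Prop) (M : Set V) : Prop :=
  IsStrongGraphModule E M ∧ 2 ≤ M.ncard ∧ ConnectedOn E M

/-- `C¹(g)`: all 1-clusters of the monochromatic di-cographs together with
all singletons. -/
def OneClusters {V Υ : Type*} (φ : V → V → Υ) : Set (Set V) :=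
  {M | (∃ i : Υ, IsOneCluster (Ggraph φ i) M) ∨ ∃ v : V, M = {v}}

/-- `M` is the least common ancestor module of `x` and `y`: the minimal strong
module of `g` containing both. -/
def IsLcaModule {V Υ : Type*} (φ : V → V → Υ) (x y : V) (M : Set V) : Prop :=
  IsStrongModule φ M ∧ x ∈ M ∧ y ∈ M ∧
    ∀ N : Set V, IsStrongModule φ N → x ∈ N → y ∈ N → M ⊆ N

/-! The configurations a symbolic ultrametric forbids, namely the eight digraphs of (U1) and a
triangle with three distinct label sets, are prime substructures, which gives one direction.
Conversely, (U1) and (U2) force every finite vertex set `X` with at least two elements to split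
into two nonempty parts with constant labels across, and for `|X| ≥ 3` the larger part is a
nontrivial module of `g[X]`. The split is built by induction: if `X \ {v}` splits with labels
`α, β`, look at the graph on `X` whose edges are the pairs not labelled `{α, β}`. If it is
disconnected, the forbidden digraphs order its components linearly along `α`, and the first
component splits off. If it is connected, (U2) and two forbidden paths on four vertices make all
vertices see `v` through one label set, so that `v` splits off, possibly together with the
vertices preceding it. -/

section SymbolicUltrametric

variable {V Υ : Type*} {φ : V → V → Υ}

open Relation

theorem Relation.ReflTransGen.exists_rel_of_not {W : Type*} {r : W → W → Prop} {p : W → Prop}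
    {a b : W} (h : ReflTransGen r a b) (ha : p a) (hb : ¬ p b) :
    ∃ c d, p c ∧ ¬ p d ∧ r c d := by
  induction h with
  | refl => exact (hb ha).elim
  | @tail c d _ hcd ih =>
    by_cases hc : p c
    · exact ⟨c, d, hc, hb, hcd⟩
    · exact ih hc

theorem Set.ncard_triple_le_two_iff {α : Type*} {a b c : α} :
    ({a, b, c} : Set α).ncard ≤ 2 ↔ a = b ∨ a = c ∨ b = c := by
  constructor
  · intro h
    by_contra! hne
    have := Set.ncard_eq_three.mpr ⟨a, b, c, hne.1, hne.2.1, hne.2.2, rfl⟩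
    omega
  · rintro (rfl | rfl | rfl) <;> simpa using (Set.ncard_insert_le _ _).trans (by simp)

theorem dset_comm (u w : V) : Dset φ u w = Dset φ w u := Set.pair_comm _ _

theorem dset_eq_pair_iff {α β : Υ} {u w : V} :
    Dset φ u w = {α, β} ↔ (φ u w = α ∧ φ w u = β) ∨ (φ u w = β ∧ φ w u = α) :=
  Set.pair_eq_pair_iff

theorem eq_of_dset_eq_pair {α β : Υ} {u w : V} (h : Dset φ u w = {α, β}) (hα : φ u w = α) :
    φ w u = β := by
  rcases dset_eq_pair_iff.mp h with ⟨-, h⟩ | ⟨h1, h2⟩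
  · exact h
  · exact h2.trans (hα.symm.trans h1)

theorem dset_eq_singleton_iff {s : Υ} {u w : V} :
    Dset φ u w = {s} ↔ φ u w = s ∧ φ w u = s := by
  rw [← Set.pair_eq_singleton, dset_eq_pair_iff, or_self]

theorem notMem_dset_iff {s : Υ} {u w : V} : s ∉ Dset φ u w ↔ φ u w ≠ s ∧ φ w u ≠ s := by
  simp [Dset, eq_comm, not_or]

theorem exists_single_arc_of_mem_dset {s : Υ} {u w : V} (hs : s ∈ Dset φ u w)
    (hne : Dset φ u w ≠ {s}) : (φ u w = s ∧ φ w u ≠ s) ∨ (φ w u = s ∧ φ u w ≠ s) := by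
  rcases hs with hs | hs
  · exact Or.inl ⟨hs.symm, fun h => hne (dset_eq_singleton_iff.mpr ⟨hs.symm, h⟩)⟩
  · exact Or.inr ⟨hs.symm, fun h => hne (dset_eq_singleton_iff.mpr ⟨h, hs.symm⟩)⟩

theorem condU2_iff : CondU2 φ ↔ ∀ x y z : V, x ≠ y → x ≠ z → y ≠ z →
    Dset φ x y = Dset φ x z ∨ Dset φ x y = Dset φ y z ∨ Dset φ x z = Dset φ y z := by
  simp only [CondU2, Set.ncard_triple_le_two_iff]

theorem CondU2.dset_eq (hU2 : CondU2 φ) {x y z : V} (hxy : x ≠ y) (hxz : x ≠ z) (hyz : y ≠ z)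
    {τ : Set Υ} (hτ : Dset φ x y = τ) (hx : Dset φ x z ≠ τ) (hy : Dset φ y z ≠ τ) :
    Dset φ x z = Dset φ y z := by
  rcases condU2_iff.mp hU2 x y z hxy hxz hyz with h | h | h
  · exact absurd (h.symm.trans hτ) hx
  · exact absurd (h.symm.trans hτ) hy
  · exact h

theorem isPrimeOn_iff {X : Set V} : IsPrimeOn φ X ↔
    ∀ M, IsModuleOn φ X M → ∀ a ∈ M, ∀ b ∈ M, ∀ c ∈ X \ M, a = b := by
  constructor
  · intro h M hM a ha b hb c hc
    rcases h M hM with rfl | ⟨v, rfl⟩ | rfl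
    · exact ha.elim
    · exact ha.trans hb.symm
    · exact (hc.2 hc.1).elim
  · intro h M hM
    by_cases hMX : M = X
    · exact Or.inr (Or.inr hMX)
    obtain ⟨c, hc⟩ := Set.nonempty_of_ssubset (hM.1.ssubset_of_ne hMX)
    have hsub : M.Subsingleton := fun a ha b hb => h M hM a ha b hb c hc
    rcases hsub.eq_empty_or_singleton with h | h
    · exact Or.inl h
    · exact Or.inr (Or.inl h)

theorem IsModuleOn.dset_eq {X M : Set V} (hM : IsModuleOn φ X M) {a b c : V} (ha : a ∈ M)
    (hb : b ∈ M) (hc : c ∈ X \ M) : Dset φ a c = Dset φ b c := by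
  obtain ⟨h1, h2⟩ := hM.2 a ha b hb c hc
  rw [Dset, Dset, h1, h2]

theorem isModuleOn_of_labels {X A : Set V} {α β : Υ} (hAX : A ⊆ X)
    (h : ∀ a ∈ A, ∀ b ∈ X \ A, φ a b = α ∧ φ b a = β) : IsModuleOn φ X A :=
  ⟨hAX, fun x hx y hy z hz =>
    ⟨(h x hx z hz).1.trans (h y hy z hz).1.symm, (h x hx z hz).2.trans (h y hy z hz).2.symm⟩⟩

/-! ### Uniformly non-prime 2-structures are symbolic ultrametrics -/

theorem CondU2.of_unp (h : Unp φ) : CondU2 φ := by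
  refine condU2_iff.mpr fun x y z hxy hxz hyz => ?_
  by_contra! hD
  refine h {x, y, z} (Set.ncard_eq_three.mpr ⟨x, y, z, hxy, hxz, hyz, rfl⟩).ge
    (isPrimeOn_iff.mpr fun M hM a ha b hb c hc => ?_)
  by_contra hab
  have hD' := hM.dset_eq ha hb hc
  have hac : a ≠ c := fun h => hc.2 (h ▸ ha)
  have hbc : b ≠ c := fun h => hc.2 (h ▸ hb)
  rcases hM.1 ha with rfl | rfl | rfl <;> rcases hM.1 hb with rfl | rfl | rfl <;>
    rcases hc.1 with rfl | rfl | rfl <;> simp_all [dset_comm]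

theorem eq_of_isGraphModule_of_finset {n : ℕ} {K : Fin n → Fin n → Prop}
    (hK : ∀ S : Finset (Fin n), IsGraphModule K S → ∀ k ∈ S, ∀ l ∈ S, ∀ m ∉ S, k = l)
    {M : Set (Fin n)} (hM : IsGraphModule K M) {k l m : Fin n} (hk : k ∈ M) (hl : l ∈ M)
    (hm : m ∉ M) : k = l := by
  classical
  refine hK (Finset.univ.filter (· ∈ M)) ?_ k (by simpa) l (by simpa) m (by simpa)
  simpa [Finset.coe_filter] using hM

theorem not_unp_of_hasInducedCopy {n : ℕ} {K : Fin n → Fin n → Prop}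
    (hK : ∀ S : Finset (Fin n), IsGraphModule K S → ∀ k ∈ S, ∀ l ∈ S, ∀ m ∉ S, k = l)
    (hn : 3 ≤ n) {i : Υ} (hcopy : HasInducedCopy (Ggraph φ i) K) : ¬ Unp φ := by
  obtain ⟨ι, hinj, hiff⟩ := hcopy
  have hcard : (Set.range ι).ncard = n := by
    rw [← Set.image_univ, Set.ncard_image_of_injective _ hinj, Set.ncard_univ, Nat.card_fin]
  refine fun h => h (Set.range ι) (hn.trans hcard.ge) (isPrimeOn_iff.mpr ?_)
  intro M hM a ha b hb c hc
  obtain ⟨k, rfl⟩ := hM.1 ha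
  obtain ⟨l, rfl⟩ := hM.1 hb
  obtain ⟨⟨m, rfl⟩, hm⟩ := hc
  have hpull : IsGraphModule K (ι ⁻¹' M) := by
    intro k hk l hl m hm
    have hkm : k ≠ m := fun e => hm (e ▸ hk)
    have hlm : l ≠ m := fun e => hm (e ▸ hl)
    obtain ⟨h1, h2⟩ := hM.2 (ι k) hk (ι l) hl (ι m) ⟨⟨m, rfl⟩, hm⟩
    rw [← hiff k m hkm, ← hiff l m hlm, ← hiff m k hkm.symm, ← hiff m l hlm.symm]
    simp only [Ggraph, hinj.ne hkm, hinj.ne hlm, hinj.ne hkm.symm, hinj.ne hlm.symm, h1, h2,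
      ne_eq, not_false_eq_true, true_and]
  rw [eq_of_isGraphModule_of_finset hK hpull ha hb hm]

-- `decide` checks that each of the eight patterns is prime; the instance it needs is large.
set_option synthInstance.maxSize 2000 in
theorem CondU1.of_unp (h : Unp φ) : CondU1 φ := fun _ => by
  refine ⟨?_, ?_, ?_, ?_, ?_, ?_, ?_, ?_⟩ <;>
    refine fun hc => not_unp_of_hasInducedCopy ?_ (by norm_num) hc h <;>
    simp only [IsGraphModule, relOf, FD3, FA, FB, FD3c, FC3, FNc, FN, FP4, Finset.mem_coe] <;>
    decide

/-! ### Forbidden configurations in a symbolic ultrametric -/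

theorem injective_vec3 {x y z : V} (hxy : x ≠ y) (hxz : x ≠ z) (hyz : y ≠ z) :
    Function.Injective ![x, y, z] := by
  intro a b h
  fin_cases a <;> fin_cases b <;> simp_all [eq_comm]

theorem injective_vec4 {x y z w : V} (hxy : x ≠ y) (hxz : x ≠ z) (hxw : x ≠ w)
    (hyz : y ≠ z) (hyw : y ≠ w) (hzw : z ≠ w) : Function.Injective ![x, y, z, w] := by
  intro a b h
  fin_cases a <;> fin_cases b <;> simp_all [eq_comm]

theorem hasInducedCopy_D3 {i : Υ} {x y z : V} (hxy : x ≠ y) (hxz : x ≠ z) (hyz : y ≠ z)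
    (h1 : φ x y = i) (h2 : φ y z = i)
    (n1 : φ y x ≠ i) (n2 : φ z y ≠ i) (n3 : φ x z ≠ i) (n4 : φ z x ≠ i) :
    HasInducedCopy (Ggraph φ i) FD3 := by
  refine ⟨![x, y, z], injective_vec3 hxy hxz hyz, fun k l hkl => ?_⟩
  fin_cases k <;> fin_cases l <;> simp_all [Ggraph, FD3, relOf, eq_comm]

theorem hasInducedCopy_C3 {i : Υ} {x y z : V} (hxy : x ≠ y) (hxz : x ≠ z) (hyz : y ≠ z)
    (h1 : φ x y = i) (h2 : φ y z = i) (h3 : φ z x = i)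
    (n1 : φ y x ≠ i) (n2 : φ z y ≠ i) (n3 : φ x z ≠ i) :
    HasInducedCopy (Ggraph φ i) FC3 := by
  refine ⟨![x, y, z], injective_vec3 hxy hxz hyz, fun k l hkl => ?_⟩
  fin_cases k <;> fin_cases l <;> simp_all [Ggraph, FC3, relOf, eq_comm]

theorem hasInducedCopy_D3c {i : Υ} {x y z : V} (hxy : x ≠ y) (hxz : x ≠ z) (hyz : y ≠ z)
    (h1 : φ x z = i) (h2 : φ x y = i) (h3 : φ y x = i) (h4 : φ z y = i)
    (n1 : φ z x ≠ i) (n2 : φ y z ≠ i) :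
    HasInducedCopy (Ggraph φ i) FD3c := by
  refine ⟨![y, z, x], injective_vec3 hyz hxy.symm hxz.symm, fun k l hkl => ?_⟩
  fin_cases k <;> fin_cases l <;> simp_all [Ggraph, FD3c, relOf, eq_comm]

theorem hasInducedCopy_N {i : Υ} {x y z w : V} (hxy : x ≠ y) (hxz : x ≠ z) (hxw : x ≠ w)
    (hyz : y ≠ z) (hyw : y ≠ w) (hzw : z ≠ w)
    (h1 : φ x y = i) (h2 : φ x z = i) (h3 : φ w z = i)
    (n1 : φ y x ≠ i) (n2 : φ z x ≠ i) (n3 : φ z w ≠ i)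
    (n4 : φ y z ≠ i) (n5 : φ z y ≠ i) (n6 : φ y w ≠ i) (n7 : φ w y ≠ i)
    (n8 : φ x w ≠ i) (n9 : φ w x ≠ i) :
    HasInducedCopy (Ggraph φ i) FN := by
  refine ⟨![y, x, z, w], injective_vec4 hxy.symm hyz hyw hxz hxw hzw, fun k l hkl => ?_⟩
  fin_cases k <;> fin_cases l <;> simp_all [Ggraph, FN, relOf, eq_comm]

theorem hasInducedCopy_P4 {i : Υ} {x y z w : V} (hxy : x ≠ y) (hxz : x ≠ z) (hxw : x ≠ w)
    (hyz : y ≠ z) (hyw : y ≠ w) (hzw : z ≠ w)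
    (h1 : φ x y = i) (h2 : φ y x = i) (h3 : φ y z = i) (h4 : φ z y = i)
    (h5 : φ z w = i) (h6 : φ w z = i)
    (n1 : φ x z ≠ i) (n2 : φ z x ≠ i) (n3 : φ x w ≠ i) (n4 : φ w x ≠ i)
    (n5 : φ y w ≠ i) (n6 : φ w y ≠ i) :
    HasInducedCopy (Ggraph φ i) FP4 := by
  refine ⟨![x, y, z, w], injective_vec4 hxy hxz hxw hyz hyw hzw, fun k l hkl => ?_⟩
  fin_cases k <;> fin_cases l <;> simp_all [Ggraph, FP4, relOf, eq_comm]

namespace CondU1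

theorem false_of_opposite_orientations (hU1 : CondU1 φ) {α β : Υ} (hab : α ≠ β) {u u' w : V}
    (huu' : u ≠ u') (huw : u ≠ w) (hu'w : u' ≠ w) (hP : Dset φ u u' ≠ {α, β})
    (e1 : φ u w = α) (e2 : φ w u = β) (e3 : φ u' w = β) (e4 : φ w u' = α) : False := by
  obtain ⟨hD3β, -, -, -, -, -, -, -⟩ := hU1 β
  obtain ⟨hD3, -, -, hD3c, hC3, -, -, -⟩ := hU1 α
  have hba : β ≠ α := hab.symm
  by_cases hp : φ u u' = α <;> by_cases hq : φ u' u = α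
  · exact hD3c (hasInducedCopy_D3c huu' huw hu'w e1 hp hq e4 (e2 ▸ hba) (e3 ▸ hba))
  · have hq' : φ u' u ≠ β := fun e => hP (dset_eq_pair_iff.mpr (Or.inl ⟨hp, e⟩))
    exact hD3β (hasInducedCopy_D3 hu'w huu'.symm huw.symm e3 e2
      (e4 ▸ hab) (e1 ▸ hab) hq' (hp ▸ hab))
  · exact hC3 (hasInducedCopy_C3 huw huu' hu'w.symm e1 e4 hq (e2 ▸ hba) (e3 ▸ hba) hp)
  · exact hD3 (hasInducedCopy_D3 huw huu' hu'w.symm e1 e4 (e2 ▸ hba) (e3 ▸ hba) hp hq)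

theorem labels_eq_of_dset_ne (hU1 : CondU1 φ) {α β : Υ} {u u' w : V}
    (huu' : u ≠ u') (huw : u ≠ w) (hu'w : u' ≠ w) (hP : Dset φ u u' ≠ {α, β})
    (hu : Dset φ u w = {α, β}) (hu' : Dset φ u' w = {α, β}) :
    φ u w = φ u' w ∧ φ w u = φ w u' := by
  rcases eq_or_ne α β with rfl | hab
  · simp only [dset_eq_pair_iff, or_self] at hu hu'
    exact ⟨hu.1.trans hu'.1.symm, hu.2.trans hu'.2.symm⟩
  rcases dset_eq_pair_iff.mp hu with ⟨a1, a2⟩ | ⟨a1, a2⟩ <;>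
    rcases dset_eq_pair_iff.mp hu' with ⟨b1, b2⟩ | ⟨b1, b2⟩
  · exact ⟨a1.trans b1.symm, a2.trans b2.symm⟩
  · exact (hU1.false_of_opposite_orientations hab huu' huw hu'w hP a1 a2 b1 b2).elim
  · exact (hU1.false_of_opposite_orientations hab huu'.symm hu'w huw
      (by rwa [dset_comm]) b1 b2 a1 a2).elim
  · exact ⟨a1.trans b1.symm, a2.trans b2.symm⟩

theorem labels_trans (hU1 : CondU1 φ) {γ δ : Υ} (hgd : γ ≠ δ) {u w v : V}
    (huw : u ≠ w) (huv : u ≠ v) (hwv : w ≠ v)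
    (e1 : φ u v = γ) (e2 : φ v u = δ) (e3 : φ w v = δ) (e4 : φ v w = γ) :
    φ u w = γ ∧ φ w u = δ := by
  obtain ⟨hD3δ, -, -, -, -, -, -, -⟩ := hU1 δ
  obtain ⟨hD3, -, -, hD3c, hC3, -, -, -⟩ := hU1 γ
  have hdg : δ ≠ γ := hgd.symm
  by_cases hp : φ u w = γ <;> by_cases hq : φ w u = γ
  · exact (hD3c (hasInducedCopy_D3c huw huv hwv e1 hp hq e4 (e2 ▸ hdg) (e3 ▸ hdg))).elim
  · refine ⟨hp, ?_⟩
    by_contra hq'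
    exact hD3δ (hasInducedCopy_D3 hwv huw.symm huv.symm e3 e2 (e4 ▸ hgd) (e1 ▸ hgd) hq'
      (hp ▸ hgd))
  · exact (hC3 (hasInducedCopy_C3 huv huw hwv.symm e1 e4 hq (e2 ▸ hdg) (e3 ▸ hdg) hp)).elim
  · exact (hD3 (hasInducedCopy_D3 huv huw hwv.symm e1 e4 (e2 ▸ hdg) (e3 ▸ hdg) hp hq)).elim

/-- The monochromatic digraph of `s` contains `P₄` if the path edges are labelled `{s}`, and
otherwise `D₃` or `N`, according to the orientations of the three `s`-arcs. -/
theorem false_of_dset_path (hU1 : CondU1 φ) {s : Υ} {x1 x2 x3 x4 : V}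
    (d12 : x1 ≠ x2) (d13 : x1 ≠ x3) (d14 : x1 ≠ x4) (d23 : x2 ≠ x3) (d24 : x2 ≠ x4)
    (d34 : x3 ≠ x4) (h23 : Dset φ x2 x3 = Dset φ x1 x2) (h34 : Dset φ x3 x4 = Dset φ x1 x2)
    (hs : s ∈ Dset φ x1 x2) (h13 : s ∉ Dset φ x1 x3) (h14 : s ∉ Dset φ x1 x4)
    (h24 : s ∉ Dset φ x2 x4) : False := by
  obtain ⟨hD3, -, -, -, -, -, hN, hP4⟩ := hU1 s
  obtain ⟨np1, np2⟩ := notMem_dset_iff.mp h13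
  obtain ⟨np3, np4⟩ := notMem_dset_iff.mp h14
  obtain ⟨np5, np6⟩ := notMem_dset_iff.mp h24
  by_cases hsym : Dset φ x1 x2 = {s}
  · obtain ⟨h12, h21⟩ := dset_eq_singleton_iff.mp hsym
    obtain ⟨h23, h32⟩ := dset_eq_singleton_iff.mp (h23.trans hsym)
    obtain ⟨h34, h43⟩ := dset_eq_singleton_iff.mp (h34.trans hsym)
    exact hP4 (hasInducedCopy_P4 d12 d13 d14 d23 d24 d34
      h12 h21 h23 h32 h34 h43 np1 np2 np3 np4 np5 np6)
  rcases exists_single_arc_of_mem_dset hs hsym with ⟨o1, no1⟩ | ⟨o1, no1⟩ <;>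
    rcases exists_single_arc_of_mem_dset (h23 ▸ hs) (h23 ▸ hsym) with ⟨o2, no2⟩ | ⟨o2, no2⟩ <;>
    rcases exists_single_arc_of_mem_dset (h34 ▸ hs) (h34 ▸ hsym) with ⟨o3, no3⟩ | ⟨o3, no3⟩
  · exact hD3 (hasInducedCopy_D3 d12 d13 d23 o1 o2 no1 no2 np1 np2)
  · exact hD3 (hasInducedCopy_D3 d12 d13 d23 o1 o2 no1 no2 np1 np2)
  · exact hN (hasInducedCopy_N d34 d23.symm d13.symm d24.symm d14.symm d12.symm
      o3 o2 o1 no3 no2 no1 np6 np5 np4 np3 np2 np1)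
  · exact hD3 (hasInducedCopy_D3 d34.symm d24.symm d23.symm o3 o2 no3 no2 np6 np5)
  · exact hD3 (hasInducedCopy_D3 d23 d24 d34 o2 o3 no2 no3 np5 np6)
  · exact hN (hasInducedCopy_N d12.symm d23 d24 d13 d14 d34
      o1 o2 o3 no1 no2 no3 np1 np2 np3 np4 np5 np6)
  · exact hD3 (hasInducedCopy_D3 d23.symm d13.symm d12.symm o2 o1 no2 no1 np2 np1)
  · exact hD3 (hasInducedCopy_D3 d23.symm d13.symm d12.symm o2 o1 no2 no1 np2 np1)

/-- `p q v z` is a path with edges labelled `σ` and chords labelled `τ`, and `v p z q` one with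
edges labelled `τ` and chords labelled `σ`; a label lying in just one of `σ`, `τ` contradicts
`false_of_dset_path` for one of them. -/
theorem false_of_dset_paths (hU1 : CondU1 φ) {p q v z : V}
    (dpq : p ≠ q) (dpv : p ≠ v) (dpz : p ≠ z) (dqv : q ≠ v) (dqz : q ≠ z) (dvz : v ≠ z)
    {σ τ : Set Υ} (hστ : σ ≠ τ)
    (hpz : Dset φ p z = τ) (hqz : Dset φ q z = τ) (hpv : Dset φ p v = τ)
    (hpq : Dset φ p q = σ) (hqv : Dset φ q v = σ) (hvz : Dset φ v z = σ) : False := by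
  obtain ⟨s, hs⟩ : ∃ s, ¬ (s ∈ σ ↔ s ∈ τ) := by
    by_contra! h
    exact hστ (Set.ext h)
  by_cases hsσ : s ∈ σ
  · have hsτ : s ∉ τ := fun h => hs ⟨fun _ => h, fun _ => hsσ⟩
    exact hU1.false_of_dset_path dpq dpv dpz dqv dqz dvz (hqv.trans hpq.symm)
      (hvz.trans hpq.symm) (hpq ▸ hsσ) (hpv ▸ hsτ) (hpz ▸ hsτ) (hqz ▸ hsτ)
  · have hsτ : s ∈ τ := by tauto
    rw [dset_comm] at hpv hqz hqv
    exact hU1.false_of_dset_path dpv.symm dvz dqv.symm dpz dpq dqz.symm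
      (hpz.trans hpv.symm) (hqz.trans hpv.symm) (hpv ▸ hsτ) (hvz ▸ hsσ) (hqv ▸ hsσ)
      (hpq ▸ hsσ)

end CondU1

/-! ### Splitting a symbolic ultrametric -/

def OffAdj (φ : V → V → Υ) (α β : Υ) (X : Set V) (u w : V) : Prop :=
  u ∈ X ∧ w ∈ X ∧ u ≠ w ∧ Dset φ u w ≠ {α, β}

/-- `u` lies in an earlier component than `w` of the graph `OffAdj φ α β X`. -/
def Precedes (φ : V → V → Υ) (α β : Υ) (X : Set V) (u w : V) : Prop :=
  u ∈ X ∧ w ∈ X ∧ ¬ ReflTransGen (OffAdj φ α β X) u w ∧ φ u w = α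

def HasUniformSplit (φ : V → V → Υ) (X : Set V) : Prop :=
  ∃ A ⊂ X, A.Nonempty ∧ ∃ α β : Υ, ∀ a ∈ A, ∀ b ∈ X \ A, φ a b = α ∧ φ b a = β

section Components

variable {α β : Υ} {X : Set V}

theorem OffAdj.symm {u w : V} (h : OffAdj φ α β X u w) : OffAdj φ α β X w u :=
  ⟨h.2.1, h.1, h.2.2.1.symm, by rw [dset_comm]; exact h.2.2.2⟩

theorem reflTransGen_offAdj_symm {u w : V} (h : ReflTransGen (OffAdj φ α β X) u w) :
    ReflTransGen (OffAdj φ α β X) w u :=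
  reflTransGen_swap.mp (ReflTransGen.mono (fun _ _ hab => hab.symm) _ _ h)

theorem dset_eq_of_not_reflTransGen {m b w : V} (hb : b ∈ X) (hw : w ∈ X)
    (hmb : ReflTransGen (OffAdj φ α β X) m b) (hmw : ¬ ReflTransGen (OffAdj φ α β X) m w) :
    b ≠ w ∧ Dset φ b w = {α, β} := by
  have hbw : b ≠ w := by
    rintro rfl
    exact hmw hmb
  refine ⟨hbw, ?_⟩
  by_contra hD
  exact hmw (hmb.tail ⟨hb, hw, hbw, hD⟩)

theorem CondU1.labels_eq_of_reflTransGen (hU1 : CondU1 φ) {m u w : V} (hw : w ∈ X)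
    (h : ReflTransGen (OffAdj φ α β X) m u) (hmw : ¬ ReflTransGen (OffAdj φ α β X) m w) :
    φ m w = φ u w ∧ φ w m = φ w u := by
  induction h with
  | refl => exact ⟨rfl, rfl⟩
  | @tail b c hmb hbc ih =>
    obtain ⟨hbw, hb⟩ := dset_eq_of_not_reflTransGen hbc.1 hw hmb hmw
    obtain ⟨hcw, hc⟩ := dset_eq_of_not_reflTransGen hbc.2.1 hw (hmb.tail hbc) hmw
    obtain ⟨h1, h2⟩ := hU1.labels_eq_of_dset_ne hbc.2.2.1 hbw hcw hbc.2.2.2 hb hc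
    exact ⟨ih.1.trans h1, ih.2.trans h2⟩

/-- Transitivity: `a` and `c` cannot lie in one component, since `b` would see them alike, and
an `α`-arc from `c` to `a` would close a directed triangle. -/
theorem CondU1.isStrictOrder_precedes (hU1 : CondU1 φ) (hab : α ≠ β) :
    IsStrictOrder V (Precedes φ α β X) := by
  refine { irrefl := fun u hu => hu.2.2.1 .refl, trans := ?_ }
  rintro a b c ⟨ha, hb, hnab, hα1⟩ ⟨-, hc, hnbc, hα2⟩
  obtain ⟨hne_ab, hDab⟩ := dset_eq_of_not_reflTransGen ha hb .refl hnab
  obtain ⟨hne_bc, hDbc⟩ := dset_eq_of_not_reflTransGen hb hc .refl hnbc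
  have hcb : φ c b = β := eq_of_dset_eq_pair hDbc hα2
  have hnac : ¬ ReflTransGen (OffAdj φ α β X) a c := fun hac =>
    hab (hα1.symm.trans ((hU1.labels_eq_of_reflTransGen hb hac hnab).1.trans hcb))
  refine ⟨ha, hc, hnac, ?_⟩
  obtain ⟨hne_ac, hDac⟩ := dset_eq_of_not_reflTransGen ha hc .refl hnac
  rcases dset_eq_pair_iff.mp hDac with ⟨h, -⟩ | ⟨hac, hca⟩
  · exact h
  obtain ⟨-, -, -, -, hC3, -, -, -⟩ := hU1 α
  exact (hC3 (hasInducedCopy_C3 hne_ab hne_ac hne_bc hα1 hα2 hca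
    (eq_of_dset_eq_pair hDab hα1 ▸ hab.symm) (hcb ▸ hab.symm) (hac ▸ hab.symm))).elim

theorem CondU1.exists_source (hU1 : CondU1 φ) (hX : X.Finite) (hne : X.Nonempty) :
    ∃ m ∈ X, ∀ w ∈ X, ¬ ReflTransGen (OffAdj φ α β X) m w → φ m w = α := by
  obtain ⟨x, hx⟩ := hne
  rcases eq_or_ne α β with rfl | hab
  · refine ⟨x, hx, fun w hw hxw => ?_⟩
    exact (dset_eq_singleton_iff.mp
      ((dset_eq_of_not_reflTransGen hx hw .refl hxw).2.trans (Set.pair_eq_singleton α))).1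
  have := hU1.isStrictOrder_precedes (X := X) hab
  obtain ⟨⟨m, hm⟩, -, hmin⟩ :=
    (hX.wellFoundedOn (r := Precedes φ α β X)).has_min Set.univ ⟨⟨x, hx⟩, trivial⟩
  refine ⟨m, hm, fun w hw hmw => ?_⟩
  rcases dset_eq_pair_iff.mp (dset_eq_of_not_reflTransGen hm hw .refl hmw).2 with
    ⟨h, -⟩ | ⟨-, h⟩
  · exact h
  · exact (hmin ⟨w, hw⟩ trivial ⟨hw, hm, fun hwm => hmw (reflTransGen_offAdj_symm hwm), h⟩).elim

theorem CondU1.hasUniformSplit_of_not_reflTransGen (hU1 : CondU1 φ) (hX : X.Finite) {x y : V}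
    (hx : x ∈ X) (hy : y ∈ X) (hxy : ¬ ReflTransGen (OffAdj φ α β X) x y) :
    HasUniformSplit φ X := by
  obtain ⟨m, hm, hsrc⟩ := hU1.exists_source (α := α) (β := β) hX ⟨x, hx⟩
  obtain ⟨w, hw, hmw⟩ : ∃ w ∈ X, ¬ ReflTransGen (OffAdj φ α β X) m w := by
    by_contra! h
    exact hxy ((reflTransGen_offAdj_symm (h x hx)).trans (h y hy))
  refine ⟨{u ∈ X | ReflTransGen (OffAdj φ α β X) m u},
    (Set.ssubset_iff_of_subset (Set.sep_subset _ _)).mpr ⟨w, hw, fun h => hmw h.2⟩,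
    ⟨m, hm, .refl⟩, α, β, fun a ha b hb => ?_⟩
  have hmb : ¬ ReflTransGen (OffAdj φ α β X) m b := fun h => hb.2 ⟨hb.1, h⟩
  obtain ⟨h1, h2⟩ := hU1.labels_eq_of_reflTransGen hb.1 ha.2 hmb
  have hα := hsrc b hb.1 hmb
  exact ⟨h1 ▸ hα, h2 ▸ eq_of_dset_eq_pair (dset_eq_of_not_reflTransGen hm hb.1 .refl hmb).2 hα⟩

end Components

section Insert

variable {α β : Υ}

theorem CondU1.hasUniformSplit_of_dset_eq (hU1 : CondU1 φ) {S : Set V} {v : V} {γ δ : Υ}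
    (hv : v ∉ S) (hS : S.Nonempty) (h : ∀ u ∈ S, Dset φ u v = {γ, δ}) :
    HasUniformSplit φ (insert v S) := by
  set T := {u ∈ S | φ u v = δ ∧ φ v u = γ}
  have hpre : ∀ u ∈ S \ T, φ u v = γ ∧ φ v u = δ := fun u hu =>
    (dset_eq_pair_iff.mp (h u hu.1)).resolve_right fun h' => hu.2 ⟨hu.1, h'⟩
  rcases T.eq_empty_or_nonempty with hT | ⟨t, ht⟩
  · obtain ⟨s, hs⟩ := hS
    refine ⟨{v}, (Set.ssubset_iff_of_subset (by simp)).mpr ⟨s, .inr hs, ?_⟩,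
      Set.singleton_nonempty v, δ, γ, ?_⟩
    · rintro rfl
      exact hv hs
    · rintro a rfl b ⟨hb, hbv⟩
      obtain ⟨e1, e2⟩ := hpre b ⟨hb.resolve_left hbv, by simp [hT]⟩
      exact ⟨e2, e1⟩
  · have htv : t ≠ v := fun h => hv (h ▸ ht.1)
    refine ⟨insert v (S \ T), (Set.ssubset_iff_of_subset ?_).mpr ⟨t, .inr ht.1, ?_⟩,
      ⟨v, Set.mem_insert v _⟩, γ, δ, ?_⟩
    · exact Set.insert_subset_insert Set.sdiff_subset
    · rintro (h | h)
      exacts [htv h, h.2 ht]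
    rintro a ha b ⟨hb, hbA⟩
    have hbv : b ≠ v := by
      rintro rfl
      exact hbA (Set.mem_insert b _)
    have hbT : b ∈ T := by
      by_contra hbT
      exact hbA (.inr ⟨hb.resolve_left hbv, hbT⟩)
    rcases ha with rfl | haST
    · exact ⟨hbT.2.2, hbT.2.1⟩
    obtain ⟨e1, e2⟩ := hpre a haST
    have hgd : γ ≠ δ := by
      rintro rfl
      exact haST.2 ⟨haST.1, e1, e2⟩
    exact hU1.labels_trans hgd (fun h => haST.2 (h ▸ hbT)) (by rintro rfl; exact hv haST.1) hbv
      e1 e2 hbT.2.1 hbT.2.2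

theorem exists_offAdj_of_reflTransGen {S P : Set V} {v p : V} (hv : v ∉ S) (hPS : P ⊆ S)
    (hcross : ∀ a ∈ P, ∀ b ∈ S \ P, Dset φ a b = {α, β}) (hp : p ∈ P)
    (h : ReflTransGen (OffAdj φ α β (insert v S)) p v) :
    ∃ s ∈ P, OffAdj φ α β (insert v S) s v := by
  obtain ⟨c, d, hc, hd, hcd⟩ := h.exists_rel_of_not (p := (· ∈ P)) hp fun h => hv (hPS h)
  obtain rfl | hdS := hcd.2.1
  · exact ⟨c, hc, hcd⟩
  · exact (hcd.2.2.2 (hcross c hc d ⟨hdS, hd⟩)).elim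

/-- On a path from `v` to a non-neighbour of `v`, the first non-neighbour `d`, its predecessor
`c` and a neighbour `z` of `v` across the split from `c` form the configuration of
`CondU1.false_of_dset_paths`. -/
theorem SymbolicUltrametric.offAdj_of_reflTransGen (hU : SymbolicUltrametric φ)
    {S A : Set V} {v : V} {D : Set Υ} (hv : v ∉ S)
    (hcross : ∀ a ∈ A, ∀ b ∈ S \ A, Dset φ a b = {α, β})
    (hsA : ∃ s ∈ A, OffAdj φ α β (insert v S) s v)
    (hsB : ∃ s ∈ S \ A, OffAdj φ α β (insert v S) s v)
    (hD : ∀ u ∈ S, OffAdj φ α β (insert v S) u v → Dset φ u v = D) {w : V} (hw : w ∈ S)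
    (hvw : ReflTransGen (OffAdj φ α β (insert v S)) v w) : OffAdj φ α β (insert v S) w v := by
  by_contra hwv
  obtain ⟨c, d, hc, hd, hcd⟩ := hvw.exists_rel_of_not
    (p := fun u => u = v ∨ OffAdj φ α β (insert v S) u v) (.inl rfl)
    (by rintro (rfl | h); exacts [hv hw, hwv h])
  rw [not_or] at hd
  have hcv : OffAdj φ α β (insert v S) c v := hc.resolve_left fun h => hd.2 (h ▸ hcd).symm
  have hcS : c ∈ S := hcd.1.resolve_left hcv.2.2.1
  have hdS : d ∈ S := hcd.2.1.resolve_left hd.1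
  have hdv : Dset φ d v = {α, β} := by
    by_contra h
    exact hd.2 ⟨.inr hdS, .inl rfl, hd.1, h⟩
  obtain ⟨z, hzv, hcz, hdz, hDcz, hDdz⟩ : ∃ z, OffAdj φ α β (insert v S) z v ∧ c ≠ z ∧ d ≠ z ∧
      Dset φ c z = {α, β} ∧ Dset φ d z = {α, β} := by
    by_cases hcA : c ∈ A
    · have hdA : d ∈ A := by
        by_contra hdA
        exact hcd.2.2.2 (hcross c hcA d ⟨hdS, hdA⟩)
      obtain ⟨z, hz, hzv⟩ := hsB
      exact ⟨z, hzv, fun h => hz.2 (h ▸ hcA), fun h => hz.2 (h ▸ hdA),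
        hcross c hcA z hz, hcross d hdA z hz⟩
    · have hdA : d ∉ A := fun hdA =>
        hcd.2.2.2 (by rw [dset_comm]; exact hcross d hdA c ⟨hcS, hcA⟩)
      obtain ⟨z, hz, hzv⟩ := hsA
      exact ⟨z, hzv, fun h => hcA (h ▸ hz), fun h => hdA (h ▸ hz),
        (dset_comm _ _).trans (hcross z hz c ⟨hcS, hcA⟩),
        (dset_comm _ _).trans (hcross z hz d ⟨hdS, hdA⟩)⟩
  have hzS : z ∈ S := hzv.1.resolve_left hzv.2.2.1
  have hdc : Dset φ d c = Dset φ c v := by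
    rw [dset_comm c v]
    exact hU.2.dset_eq hd.1 hcd.2.2.1.symm hcv.2.2.1.symm hdv
      (by rw [dset_comm]; exact hcd.2.2.2) (by rw [dset_comm]; exact hcv.2.2.2)
  exact hU.1.false_of_dset_paths hcd.2.2.1.symm hd.1 hdz hcv.2.2.1 hcz hzv.2.2.1.symm
    hcv.2.2.2 hDdz hDcz hdv hdc rfl
    ((dset_comm v z).trans ((hD z hzS hzv).trans (hD c hcS hcv).symm))

theorem SymbolicUltrametric.hasUniformSplit_of_connected (hU : SymbolicUltrametric φ)
    {S A : Set V} {v : V} (hv : v ∉ S) (hAS : A ⊂ S) (hA : A.Nonempty)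
    (hcross : ∀ a ∈ A, ∀ b ∈ S \ A, Dset φ a b = {α, β})
    (hconn : ∀ x ∈ insert v S, ∀ y ∈ insert v S, ReflTransGen (OffAdj φ α β (insert v S)) x y) :
    HasUniformSplit φ (insert v S) := by
  have hvX : v ∈ insert v S := Set.mem_insert v S
  have hcross' : ∀ b ∈ S \ A, ∀ a ∈ S \ (S \ A), Dset φ b a = {α, β} := by
    intro b hb a ha
    rw [Set.sdiff_sdiff_cancel_left hAS.subset] at ha
    rw [dset_comm]
    exact hcross a ha b hb
  obtain ⟨a0, ha0⟩ := hA
  obtain ⟨b0, hb0⟩ := Set.nonempty_of_ssubset hAS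
  obtain ⟨sA, hsA, hsAv⟩ := exists_offAdj_of_reflTransGen hv hAS.subset hcross ha0
    (hconn _ (.inr (hAS.subset ha0)) _ hvX)
  obtain ⟨sB, hsB, hsBv⟩ := exists_offAdj_of_reflTransGen hv Set.sdiff_subset hcross' hb0
    (hconn _ (.inr hb0.1) _ hvX)
  have hne : ∀ a ∈ A, ∀ b ∈ S \ A, a ≠ b := fun a ha b hb h => hb.2 (h ▸ ha)
  have hbase : Dset φ sB v = Dset φ sA v :=
    (hU.2.dset_eq (hne sA hsA sB hsB) hsAv.2.2.1 hsBv.2.2.1 (hcross sA hsA sB hsB)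
      hsAv.2.2.2 hsBv.2.2.2).symm
  have hcommon : ∀ u ∈ S, OffAdj φ α β (insert v S) u v → Dset φ u v = Dset φ sA v := by
    intro u hu huv
    by_cases huA : u ∈ A
    · exact (hU.2.dset_eq (hne u huA sB hsB) huv.2.2.1 hsBv.2.2.1 (hcross u huA sB hsB)
        huv.2.2.2 hsBv.2.2.2).trans hbase
    · exact (hU.2.dset_eq (hne sA hsA u ⟨hu, huA⟩) hsAv.2.2.1 huv.2.2.1
        (hcross sA hsA u ⟨hu, huA⟩) hsAv.2.2.2 huv.2.2.2).symm
  exact hU.1.hasUniformSplit_of_dset_eq hv ⟨a0, hAS.subset ha0⟩ fun u hu =>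
    hcommon u hu (hU.offAdj_of_reflTransGen hv hcross ⟨sA, hsA, hsAv⟩
      ⟨sB, hsB, hsBv⟩ hcommon hu (hconn v hvX u (.inr hu)))

end Insert

theorem HasUniformSplit.not_isPrimeOn {X : Set V} (h : HasUniformSplit φ X) (h3 : 3 ≤ X.ncard) :
    ¬ IsPrimeOn φ X := by
  obtain ⟨A, hAX, hA, α, β, hlab⟩ := h
  have hdiff : X \ (X \ A) = A := Set.sdiff_sdiff_cancel_left hAX.subset
  have hA' : IsModuleOn φ X A := isModuleOn_of_labels hAX.subset hlab
  have hB' : IsModuleOn φ X (X \ A) := isModuleOn_of_labels Set.sdiff_subset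
    fun b hb a ha => (hlab a (hdiff ▸ ha) b hb).symm
  have hfin : X.Finite := Set.finite_of_ncard_pos (by omega)
  have : Finite ↑A := (hfin.subset hAX.subset).to_subtype
  have : Finite ↑(X \ A) := hfin.sdiff.to_subtype
  have hcard := Set.ncard_le_ncard_sdiff_add_ncard X A (hfin.subset hAX.subset)
  rw [isPrimeOn_iff]
  intro hprime
  by_cases hA2 : 1 < A.ncard
  · obtain ⟨a, ha, b, hb, hab⟩ := Set.one_lt_ncard_iff_nontrivial.mp hA2
    obtain ⟨c, hc⟩ := Set.nonempty_of_ssubset hAX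
    exact hab (hprime A hA' a ha b hb c hc)
  · obtain ⟨a, ha, b, hb, hab⟩ := Set.one_lt_ncard_iff_nontrivial.mp (by omega : 1 < (X \ A).ncard)
    obtain ⟨c, hc⟩ := hA
    exact hab (hprime (X \ A) hB' a ha b hb c (hdiff.symm ▸ hc))

theorem SymbolicUltrametric.hasUniformSplit (hU : SymbolicUltrametric φ) {X : Set V}
    (hX : X.Finite) (h2 : 2 ≤ X.ncard) : HasUniformSplit φ X := by
  induction X, hX using Set.Finite.induction_on with
  | empty => simp at h2
  | @insert v S hv hS ih =>
    rw [Set.ncard_insert_of_notMem hv hS] at h2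
    by_cases h1 : S.ncard = 1
    · obtain ⟨u, rfl⟩ := Set.ncard_eq_one.mp h1
      exact hU.1.hasUniformSplit_of_dset_eq hv ⟨u, rfl⟩ fun w hw => by rw [hw]; rfl
    obtain ⟨A, hAS, hA, α, β, hlab⟩ := ih (by omega)
    by_cases hconn : ∀ x ∈ insert v S, ∀ y ∈ insert v S,
        ReflTransGen (OffAdj φ α β (insert v S)) x y
    · refine hU.hasUniformSplit_of_connected hv hAS hA (fun a ha b hb => ?_) hconn
      rw [Dset, (hlab a ha b hb).1, (hlab a ha b hb).2]
    · simp only [not_forall] at hconn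
      obtain ⟨x, hx, y, hy, hxy⟩ := hconn
      exact hU.1.hasUniformSplit_of_not_reflTransGen (hS.insert v) hx hy hxy

end SymbolicUltrametric

/-- Theorem: an arbitrary 2-structure is uniformly non-prime iff `δ_g` is a
symbolic ultrametric. -/
theorem unp_iff_symbolicUltrametric {V Υ : Type*} (φ : V → V → Υ) :
    Unp φ ↔ SymbolicUltrametric φ := by
  refine ⟨fun h => ⟨CondU1.of_unp h, CondU2.of_unp h⟩, fun hU X hX => ?_⟩
  exact (hU.hasUniformSplit (Set.finite_of_ncard_pos (by omega)) (by omega)).not_isPrimeOn hX
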